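/- Let X be a Banach space, B : X × X → X a bilinear map with ‖B(x₁,x₂)‖ ≤ K‖x₁‖‖x₂‖ for all x₁,x₂ and some K > 0, and L : X → X a bounded linear operator with operator norm M satisfying 0 ≤ M < 1. Then for every y ∈ X with ‖y‖ < (1-M)²/(4K), the equation x = y + L(x) + B(x,x) has a unique solution x with ‖x‖ ≤ (1-M)/(2K); moreover this solution satisfies ‖x‖ ≤ (M - M²)/(2K) + 2‖y‖. -/
import Mathlib

set_option maxHeartbeats 1000000 in
theorem stmt_0 {X : Type*} [NormedAddCommGroup X] [NormedSpace ℝ X] [CompleteSpace X]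
    (B : X →L[ℝ] X →L[ℝ] X) (K : ℝ) (hK : 0 < K)
    (hB : ∀ x₁ x₂ : X, ‖B x₁ x₂‖ ≤ K * ‖x₁‖ * ‖x₂‖)
    (L : X →L[ℝ] X) (M : ℝ) (hLM : ‖L‖ = M) (hM : M < 1)
    (y : X) (hy : ‖y‖ < (1 - M) ^ 2 / (4 * K)) :
    (∃! x : X, x = y + L x + B x x ∧ ‖x‖ ≤ (1 - M) / (2 * K)) ∧
      ∀ x : X, (x = y + L x + B x x ∧ ‖x‖ ≤ (1 - M) / (2 * K)) →
        ‖x‖ ≤ (M - M ^ 2) / (2 * K) + 2 * ‖y‖ := by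
  have hM0 : 0 ≤ M := hLM ▸ norm_nonneg L
  have ha0 : 0 < 1 - M := by linarith
  have hy4K : 4 * K * ‖y‖ < (1 - M) ^ 2 := by
    rw [lt_div_iff₀ (by positivity : (0:ℝ) < 4 * K)] at hy
    nlinarith [hy]
  set Δ : ℝ := (1 - M) ^ 2 - 4 * K * ‖y‖ with hΔdef
  have hΔ0 : 0 < Δ := by simp only [hΔdef]; linarith
  set s : ℝ := Real.sqrt Δ with hsdef
  have hs2 : s ^ 2 = Δ := Real.sq_sqrt hΔ0.le
  have hs0 : 0 < s := Real.sqrt_pos.mpr hΔ0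
  have hsa : s ≤ 1 - M := by nlinarith [norm_nonneg y, hs2]
  have hΔ1 : Δ ≤ 1 := by nlinarith [norm_nonneg y]
  have hs1 : s ≤ 1 := by nlinarith [hs2]
  have hΔs : Δ ≤ s := by nlinarith [hs2]
  set ρ : ℝ := (1 - M - s) / (2 * K) with hρdef
  have hρ0 : 0 ≤ ρ := by apply div_nonneg (by linarith) (by positivity)
  have h2Kρ : 2 * K * ρ = 1 - M - s := by
    rw [hρdef]; field_simp
  have hρr : ρ ≤ (1 - M) / (2 * K) := by
    rw [div_le_div_iff₀ (by positivity) (by positivity)]; nlinarith [h2Kρ]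
  have hρeq : K * ρ ^ 2 - (1 - M) * ρ + ‖y‖ = 0 := by
    have h1 : (2 * K * ρ) ^ 2 = (1 - M - s) ^ 2 := by rw [h2Kρ]
    nlinarith [hs2, h1, h2Kρ]
  set T : X → X := fun x => y + L x + B x x with hT
  have hTnorm : ∀ x : X, ‖T x‖ ≤ ‖y‖ + M * ‖x‖ + K * ‖x‖ * ‖x‖ := by
    intro x
    have h2 : ‖L x‖ ≤ M * ‖x‖ := hLM ▸ L.le_opNorm x
    have h3 : ‖B x x‖ ≤ K * ‖x‖ * ‖x‖ := hB x x
    calc ‖T x‖ ≤ ‖y + L x‖ + ‖B x x‖ := norm_add_le _ _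
      _ ≤ ‖y‖ + ‖L x‖ + ‖B x x‖ := by linarith [norm_add_le y (L x)]
      _ ≤ _ := by linarith
  have hTball : ∀ x : X, ‖x‖ ≤ ρ → ‖T x‖ ≤ ρ := by
    intro x hx
    have h1 := hTnorm x
    have hh : (0:ℝ) ≤ K * ((ρ - ‖x‖) * (ρ + ‖x‖)) :=
      mul_nonneg hK.le (mul_nonneg (by linarith) (by positivity))
    nlinarith [hρeq, mul_nonneg hM0 (sub_nonneg.mpr hx), hh]
  have hTlip : ∀ x x' : X, ‖x‖ ≤ ρ → ‖x'‖ ≤ ρ →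
      ‖T x - T x'‖ ≤ (1 - s) * ‖x - x'‖ := by
    intro x x' hx hx'
    have hdecomp : T x - T x' = L (x - x') + (B x (x - x') + B (x - x') x') := by
      simp only [hT, map_sub, ContinuousLinearMap.sub_apply]
      abel
    have h1 : ‖L (x - x')‖ ≤ M * ‖x - x'‖ := hLM ▸ L.le_opNorm _
    have h2 : ‖B x (x - x')‖ ≤ K * ‖x‖ * ‖x - x'‖ := hB _ _
    have h3 : ‖B (x - x') x'‖ ≤ K * ‖x - x'‖ * ‖x'‖ := hB _ _
    have h4 : ‖T x - T x'‖ ≤ ‖L (x - x')‖ + (‖B x (x - x')‖ + ‖B (x - x') x'‖) := by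
      rw [hdecomp]
      calc ‖L (x - x') + (B x (x - x') + B (x - x') x')‖
          ≤ ‖L (x - x')‖ + ‖B x (x - x') + B (x - x') x'‖ := norm_add_le _ _
        _ ≤ _ := by linarith [norm_add_le (B x (x - x')) (B (x - x') x')]
    have hd0 : (0:ℝ) ≤ ‖x - x'‖ := norm_nonneg _
    nlinarith [h2Kρ, mul_nonneg hK.le (mul_nonneg (sub_nonneg.mpr hx) hd0),
      mul_nonneg hK.le (mul_nonneg (sub_nonneg.mpr hx') hd0)]
  -- fixed points in the big ball lie in the small ball
  have hsmall : ∀ x : X, x = T x → ‖x‖ ≤ (1 - M) / (2 * K) → ‖x‖ ≤ ρ := by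
    intro x hx hxr
    have h1 : ‖x‖ ≤ ‖y‖ + M * ‖x‖ + K * ‖x‖ * ‖x‖ := by
      have h := hTnorm x; rwa [← hx] at h
    have hP : 0 ≤ K * ‖x‖ ^ 2 - (1 - M) * ‖x‖ + ‖y‖ := by nlinarith [h1]
    have hxr' : 2 * K * ‖x‖ ≤ 1 - M := by
      rw [le_div_iff₀ (by positivity)] at hxr; nlinarith [hxr]
    have key : 0 ≤ (‖x‖ - ρ) * (K * (‖x‖ + ρ) - (1 - M)) := by nlinarith [hP, hρeq]
    have hneg : K * (‖x‖ + ρ) - (1 - M) < 0 := by nlinarith [h2Kρ]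
    by_contra hcon
    push_neg at hcon
    nlinarith [key, hneg, mul_pos (sub_pos.mpr hcon) (by linarith : 0 < (1 - M) - K * (‖x‖ + ρ))]
  -- existence via the contraction mapping principle on the closed ball of radius ρ
  obtain ⟨x₀, hx₀mem, hx₀fix⟩ : ∃ x : X, ‖x‖ ≤ ρ ∧ x = T x := by
    have hclosed : IsClosed (Metric.closedBall (0 : X) ρ) := Metric.isClosed_closedBall
    haveI : CompleteSpace (Metric.closedBall (0 : X) ρ) := hclosed.completeSpace_coe
    haveI : Nonempty (Metric.closedBall (0 : X) ρ) :=
      ⟨⟨0, Metric.mem_closedBall_self hρ0⟩⟩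
    set f : Metric.closedBall (0 : X) ρ → Metric.closedBall (0 : X) ρ :=
      fun p => ⟨T p.1, by
        rw [Metric.mem_closedBall, dist_zero_right]
        exact hTball p.1 (mem_closedBall_zero_iff.mp p.2)⟩
      with hf
    have hcontr : ContractingWith (Real.toNNReal (1 - s)) f := by
      constructor
      · rw [← NNReal.coe_lt_one, Real.coe_toNNReal _ (by linarith)]
        linarith
      · apply LipschitzWith.of_dist_le_mul
        intro p q
        rw [Real.coe_toNNReal _ (by linarith)]
        have hp : ‖(p : X)‖ ≤ ρ := mem_closedBall_zero_iff.mp p.2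
        have hq : ‖(q : X)‖ ≤ ρ := mem_closedBall_zero_iff.mp q.2
        simp only [hf, Subtype.dist_eq, dist_eq_norm]
        exact hTlip _ _ hp hq
    refine ⟨(ContractingWith.fixedPoint f hcontr).1, ?_, ?_⟩
    · exact mem_closedBall_zero_iff.mp (ContractingWith.fixedPoint f hcontr).2
    · have h := hcontr.fixedPoint_isFixedPt
      exact (congrArg Subtype.val h).symm
  have hx₀big : ‖x₀‖ ≤ (1 - M) / (2 * K) := le_trans hx₀mem hρr
  constructor
  · refine ⟨x₀, ⟨hx₀fix, hx₀big⟩, ?_⟩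
    intro x' hx'
    obtain ⟨hx'fix, hx'big⟩ := hx'
    have hx'small : ‖x'‖ ≤ ρ := hsmall x' hx'fix hx'big
    have hx'T : x' = T x' := hx'fix
    have hd : ‖x' - x₀‖ ≤ (1 - s) * ‖x' - x₀‖ := by
      have h := hTlip x' x₀ hx'small hx₀mem
      rwa [← hx'T, ← hx₀fix] at h
    have hd0 : ‖x' - x₀‖ = 0 := by nlinarith [norm_nonneg (x' - x₀)]
    exact sub_eq_zero.mp (norm_eq_zero.mp hd0)
  · intro x hx
    obtain ⟨hxfix, hxbig⟩ := hx
    have hxsmall : ‖x‖ ≤ ρ := hsmall x hxfix hxbig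
    have hfinal : ρ ≤ (M - M ^ 2) / (2 * K) + 2 * ‖y‖ := by
      rw [div_add' _ _ _ (by positivity : (2*K) ≠ 0),
        ← sub_nonneg, ← sub_div] at *
      apply div_nonneg ?_ (by positivity)
      nlinarith [hΔs, h2Kρ]
    linarith
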